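/- Fix n ≥ 3, let G = ℤ/2ℤ = {1, a}, and let Γ be the n-Cayley digraph on G × ℤ/nℤ with T_{i,i+1} = T_{i+1,i} = {1} for i ≠ 1, T_{1,2} = T_{2,1} = {a}, and all other connection sets empty. Then there is a unique undirected path of length n − 1 in Γ from (1,1) to (1,2), namely (1,1), (1,0), (1,n−1), (1,n−2), …, (1,3), (1,2), while there is no undirected path of length n − 1 from (1,2) to (a,1). -/

import Mathlib

namespace PDR

/-- `σ` is an automorphism of the digraph `D`. -/
def IsDigraphAut {V : Type*} (D : Digraph V) (σ : Equiv.Perm V) : Prop :=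
  ∀ u v : V, D.Adj (σ u) (σ v) ↔ D.Adj u v

/-- The automorphism group of a digraph, as a subgroup of the symmetric group. -/
def digraphAut {V : Type*} (D : Digraph V) : Subgroup (Equiv.Perm V) where
  carrier := {σ | IsDigraphAut D σ}
  one_mem' := by intro u v; simp
  mul_mem' := by
    intro σ τ hσ hτ u v
    simpa [Equiv.Perm.mul_apply] using (hσ (τ u) (τ v)).trans (hτ u v)
  inv_mem' := by
    intro σ hσ u v
    simpa using (hσ (σ⁻¹ u) (σ⁻¹ v)).symm

/-- A digraph is regular if all vertices have the same out-valency and in-valency. -/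
def IsRegularDigraph {V : Type*} (D : Digraph V) : Prop :=
  ∃ d : ℕ, ∀ v : V, {u | D.Adj v u}.ncard = d ∧ {u | D.Adj u v}.ncard = d

/-- `D` is an `n`-partite digraphical representation of `G`: `D` is regular,
`Aut(D) ≅ G`, `Aut(D)` is semiregular with exactly `n` orbits, and each orbit
induces an empty sub-digraph. -/
def IsNPDR (G : Type*) [Group G] (n : ℕ) {V : Type*} (D : Digraph V) : Prop :=
  IsRegularDigraph D ∧
  Nonempty (G ≃* digraphAut D) ∧
  (∀ σ ∈ digraphAut D, ∀ v : V, σ v = v → σ = 1) ∧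
  (∃ f : V → Fin n, Function.Surjective f ∧
     ∀ u v : V, f u = f v ↔ ∃ σ ∈ digraphAut D, σ u = v) ∧
  (∀ u v : V, (∃ σ ∈ digraphAut D, σ u = v) → ¬ D.Adj u v)

/-- The `n`-Cayley digraph of `G` with connection sets `T i j`:
arcs `(g,i) → (t*g, j)` for `t ∈ T i j`. -/
def nCay (G : Type*) [Group G] (n : ℕ) (T : ZMod n → ZMod n → Set G) :
    Digraph (G × ZMod n) where
  Adj p q := q.1 * p.1⁻¹ ∈ T p.2 q.2

/-- Right translation `(x, i) ↦ (x·g, i)`. -/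
def rtransl (G : Type*) [Group G] (n : ℕ) (g : G) : Equiv.Perm (G × ZMod n) :=
  (Equiv.mulRight g).prodCongr (Equiv.refl (ZMod n))


/-- An undirected path with `k+1` vertices (length `k`) in a digraph: distinct
vertices, consecutive ones joined by an arc in at least one direction. -/
def IsUndirPath {V : Type} (D : Digraph V) {k : ℕ} (p : Fin (k + 1) → V) : Prop :=
  Function.Injective p ∧
  ∀ i : Fin k, D.Adj (p i.castSucc) (p i.succ) ∨ D.Adj (p i.succ) (p i.castSucc)

/-- The group `ℤ/2ℤ` (written multiplicatively) and its generator. -/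
abbrev GZ2 := Multiplicative (ZMod 2)
def aZ2 : GZ2 := Multiplicative.ofAdd 1

/-- Connection sets: `T i (i+1) = T (i+1) i = {1}` for `i ≠ 1`,
`T 1 2 = T 2 1 = {a}`, all others empty. -/
def T4 (n : ℕ) : ZMod n → ZMod n → Set GZ2 := fun i j =>
  if (j = i + 1 ∧ i ≠ 1) ∨ (i = j + 1 ∧ j ≠ 1) then {1}
  else if (i = 1 ∧ j = 2) ∨ (i = 2 ∧ j = 1) then {aZ2}
  else ∅

end PDR

/-!
The digraph `nCay GZ2 n (T4 n)` is, as an undirected graph, the single `2n`-cycle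
`(1,1), (1,0), (1,n-1), …, (1,2), (a,1), (a,0), …, (a,2)`; `cycleLabel` is the position of a
vertex on it. An injective sequence in `ZMod (2n)` moving by `±1` at each step cannot turn back,
so along an undirected path of length `n - 1` the labels are `p 0 + j` or `p 0 - j`. The
endpoint labels `0, n - 1` force the first choice, while `n - 1, n` are incompatible with both.
-/

theorem Fin.exists_eq_add_nsmul_of_injective {A : Type*} [AddCommGroup A] {k : ℕ} {a : A}
    {p : Fin (k + 1) → A} (hp : Function.Injective p)
    (hstep : ∀ i : Fin k, p i.succ = p i.castSucc + a ∨ p i.castSucc = p i.succ + a) :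
    ∃ ε, (ε = a ∨ ε = -a) ∧ ∀ j, p j = p 0 + j.val • ε := by
  rcases k with _ | k
  · exact ⟨a, .inl rfl, fun j => by rw [Fin.fin_one_eq_zero j]; simp⟩
  have hdiff : ∀ i : Fin (k + 1), p i.succ - p i.castSucc = a ∨ p i.succ - p i.castSucc = -a :=
    fun i => (hstep i).imp (fun h => by rw [h]; abel) (fun h => by rw [h]; abel)
  set ε := p 1 - p 0
  have hconst : ∀ i : Fin (k + 1), p i.succ - p i.castSucc = ε := by
    intro i
    induction i using Fin.induction with
    | zero => rfl
    | succ i ih =>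
      by_contra hne
      -- a step against the direction `ε` would revisit `p i.castSucc.castSucc`
      have hback : p i.succ.succ - p i.succ.castSucc = -ε := by
        rcases hdiff 0 with h0 | h0 <;> rcases hdiff i.succ with h | h <;> simp_all [ε]
      have hrevisit : p i.succ.succ = p i.castSucc.castSucc := by
        rw [← Fin.succ_castSucc, eq_neg_iff_add_eq_zero, ← ih] at hback
        exact sub_eq_zero.mp (by simpa using hback)
      exact absurd (hp hrevisit) (by simp [Fin.ext_iff]; omega)
  refine ⟨ε, hdiff 0, fun j => ?_⟩
  induction j using Fin.induction with
  | zero => simp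
  | succ i ih =>
    rw [Fin.val_succ, succ_nsmul, ← add_assoc, ← Fin.val_castSucc, ← ih, ← hconst i]
    abel

theorem ZMod.natCast_ne_zero_of_lt {m a : ℕ} (h0 : a ≠ 0) (h : a < m) : (a : ZMod m) ≠ 0 := by
  rw [Ne, ZMod.natCast_eq_zero_iff]
  exact fun hdvd => h0 (Nat.eq_zero_of_dvd_of_lt hdvd h)

namespace PDR

theorem eq_one_or_eq_aZ2 (g : GZ2) : g = 1 ∨ g = aZ2 := by
  revert g; decide

theorem aZ2_ne_one : aZ2 ≠ 1 := by decide

theorem aZ2_mul_self : aZ2 * aZ2 = 1 := by decide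

def cycleLabel (n : ℕ) (v : GZ2 × ZMod n) : ZMod (2 * n) :=
  (1 - v.2).cast + if v.1 = 1 then 0 else (n : ZMod (2 * n))

theorem cycleLabel_injective (n : ℕ) [NeZero n] : Function.Injective (cycleLabel n) := by
  rintro ⟨g, i⟩ ⟨h, j⟩ hgh
  have hij : i = j := by
    have := congrArg (ZMod.castHom (dvd_mul_left n 2) (ZMod n)) hgh
    simpa [cycleLabel, ZMod.cast_cast_zmod_of_le (by omega : n ≤ 2 * n), apply_ite ZMod.cast,
      ZMod.cast_natCast (dvd_mul_left n 2)] using this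
  subst hij
  have hn : (n : ZMod (2 * n)) ≠ 0 :=
    ZMod.natCast_ne_zero_of_lt (NeZero.ne n) (by have := NeZero.pos n; omega)
  simp only [cycleLabel, add_right_inj] at hgh
  rcases eq_one_or_eq_aZ2 g with rfl | rfl <;> rcases eq_one_or_eq_aZ2 h with rfl | rfl <;>
    simp_all [aZ2_ne_one, aZ2_ne_one.symm]

theorem cycleLabel_adj {n : ℕ} {u v : GZ2 × ZMod n} (huv : (nCay GZ2 n (T4 n)).Adj u v) :
    cycleLabel n u = cycleLabel n v + 1 ∨ cycleLabel n v = cycleLabel n u + 1 := by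
  obtain ⟨g, i⟩ := u
  obtain ⟨h, j⟩ := v
  have h2n : (n : ZMod (2 * n)) + n = 0 := by
    rw [← two_mul]; exact_mod_cast ZMod.natCast_self (2 * n)
  have hlabel_sub_one (g : GZ2) (i : ZMod n) (hi : i ≠ 1) :
      cycleLabel n (g, i + 1) = cycleLabel n (g, i) - 1 := by
    simp only [cycleLabel, show 1 - (i + 1) = (1 - i) - 1 by ring, ZMod.cast_sub_one,
      if_neg (sub_ne_zero.mpr hi.symm)]
    ring
  have hlabel_one (g : GZ2) : cycleLabel n (g, 1) = if g = 1 then 0 else (n : ZMod (2 * n)) := by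
    simp [cycleLabel]
  have hlabel_two (g : GZ2) :
      cycleLabel n (g, 2) = n - 1 + if g = 1 then 0 else (n : ZMod (2 * n)) := by
    simp [cycleLabel, show (1 : ZMod n) - 2 = -1 by ring, ZMod.cast_neg_one]
  simp only [nCay, T4] at huv
  split_ifs at huv with hunit ha
  · obtain rfl : h = g := mul_inv_eq_one.mp huv
    rcases hunit with ⟨rfl, hi⟩ | ⟨rfl, hj⟩
    · exact .inl (by rw [hlabel_sub_one _ i hi]; ring)
    · exact .inr (by rw [hlabel_sub_one _ j hj]; ring)
  · obtain rfl : h = aZ2 * g := mul_inv_eq_iff_eq_mul.mp huv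
    rcases ha with ⟨rfl, rfl⟩ | ⟨rfl, rfl⟩
    · left
      rcases eq_one_or_eq_aZ2 g with rfl | rfl
      · simp [hlabel_one, hlabel_two, aZ2_ne_one]; linear_combination -h2n
      · simp [hlabel_one, hlabel_two, aZ2_ne_one, aZ2_mul_self]
    · right
      rcases eq_one_or_eq_aZ2 g with rfl | rfl
      · simp [hlabel_one, hlabel_two, aZ2_ne_one]
      · simp [hlabel_one, hlabel_two, aZ2_ne_one, aZ2_mul_self]; linear_combination -h2n
  · simp at huv

theorem IsUndirPath.exists_cycleLabel_eq {n k : ℕ} [NeZero n] {p : Fin (k + 1) → GZ2 × ZMod n}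
    (hp : IsUndirPath (nCay GZ2 n (T4 n)) p) :
    ∃ ε : ZMod (2 * n), (ε = 1 ∨ ε = -1) ∧
      ∀ j, cycleLabel n (p j) = cycleLabel n (p 0) + j.val • ε :=
  Fin.exists_eq_add_nsmul_of_injective ((cycleLabel_injective n).comp hp.1)
    fun i => (hp.2 i).elim (fun h => (cycleLabel_adj h).symm) cycleLabel_adj

theorem cycleLabel_one_one_sub {n t : ℕ} (ht : t < n) :
    cycleLabel n (1, 1 - (t : ZMod n)) = t := by
  have : NeZero n := ⟨by omega⟩
  simp [cycleLabel, ZMod.cast_eq_val, ZMod.val_natCast_of_lt ht]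

theorem cycleLabel_one_one (n : ℕ) : cycleLabel n (1, 1) = 0 := by
  simp [cycleLabel]

theorem cycleLabel_one_two {n : ℕ} (hn : 2 ≤ n) : cycleLabel n (1, 2) = (n - 1 : ℕ) := by
  have h2 : (2 : ZMod n) = 1 - ((n - 1 : ℕ) : ZMod n) := by
    push_cast [Nat.cast_sub (by omega : 1 ≤ n)]
    simp only [ZMod.natCast_self]
    ring
  rw [h2, cycleLabel_one_one_sub (by omega)]

theorem cycleLabel_aZ2_one (n : ℕ) : cycleLabel n (aZ2, 1) = n := by
  simp [cycleLabel, aZ2_ne_one]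

theorem nCay_T4_adj_add_one {n : ℕ} (g : GZ2) {i : ZMod n} (hi : i ≠ 1) :
    (nCay GZ2 n (T4 n)).Adj (g, i) (g, i + 1) := by
  simp [nCay, T4, hi]

theorem isUndirPath_one_sub {n k : ℕ} (hk : k < n) :
    IsUndirPath (nCay GZ2 n (T4 n)) fun j : Fin (k + 1) => ((1 : GZ2), 1 - (j.val : ZMod n)) := by
  refine ⟨.of_comp (f := cycleLabel n) fun i j hij => Fin.ext ?_, fun i => .inr ?_⟩
  · refine CharP.natCast_injOn_Iio (ZMod (2 * n)) (2 * n) (by simp; omega) (by simp; omega) ?_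
    simpa [cycleLabel_one_one_sub (show i.val < n by omega),
      cycleLabel_one_one_sub (show j.val < n by omega)] using hij
  · have hne : 1 - ((i.val + 1 : ℕ) : ZMod n) ≠ 1 := by
      rw [Ne, sub_eq_self]
      exact ZMod.natCast_ne_zero_of_lt (by omega) (by omega)
    simpa [neg_add_eq_sub] using nCay_T4_adj_add_one 1 hne

theorem IsUndirPath.eq_one_sub {n : ℕ} (hn : 2 ≤ n) {p : Fin (n - 1 + 1) → GZ2 × ZMod n}
    (hp : IsUndirPath (nCay GZ2 n (T4 n)) p) (hp0 : p 0 = (1, 1))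
    (hp_last : p (Fin.last (n - 1)) = (1, 2)) :
    p = fun j => ((1 : GZ2), 1 - (j.val : ZMod n)) := by
  have : NeZero n := ⟨by omega⟩
  obtain ⟨ε, rfl | rfl, hpε⟩ := hp.exists_cycleLabel_eq
  · funext j
    apply cycleLabel_injective n
    rw [hpε, hp0, cycleLabel_one_one, cycleLabel_one_one_sub (by omega)]
    simp
  · have hlast := hpε (Fin.last _)
    rw [hp_last, hp0, cycleLabel_one_two hn, cycleLabel_one_one] at hlast
    refine (ZMod.natCast_ne_zero_of_lt (m := 2 * n) (a := n - 1 + (n - 1)) (by omega) (by omega)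
      ?_).elim
    simp only [Fin.val_last, smul_neg, nsmul_eq_mul, mul_one, zero_add] at hlast
    push_cast
    linear_combination hlast

theorem IsUndirPath.last_ne_aZ2_one {n : ℕ} (hn : 3 ≤ n) {p : Fin (n - 1 + 1) → GZ2 × ZMod n}
    (hp : IsUndirPath (nCay GZ2 n (T4 n)) p) (hp0 : p 0 = (1, 2)) :
    p (Fin.last (n - 1)) ≠ (aZ2, 1) := by
  have : NeZero n := ⟨by omega⟩
  intro hp_last
  obtain ⟨ε, hε, hpε⟩ := hp.exists_cycleLabel_eq
  have hlast := hpε (Fin.last _)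
  rw [hp_last, hp0, cycleLabel_one_two (by omega), cycleLabel_aZ2_one, Fin.val_last] at hlast
  rcases hε with rfl | rfl
  · refine ZMod.natCast_ne_zero_of_lt (m := 2 * n) (a := n - 2) (by omega) (by omega) ?_
    push_cast [nsmul_eq_mul, Nat.cast_sub (by omega : 2 ≤ n), Nat.cast_sub (by omega : 1 ≤ n)]
      at hlast ⊢
    linear_combination -hlast
  · exact ZMod.natCast_ne_zero_of_lt (m := 2 * n) (a := n) (by omega) (by omega)
      (by simpa using hlast)

/-- in the digraph above there is a unique undirected path of length
`n-1` from `(1,1)` to `(1,2)`, namely `(1,1), (1,0), (1,n-1), …, (1,3), (1,2)`,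
i.e. `k ↦ (1, 1 - k)`; and no undirected path of length `n-1` from `(1,2)` to `(a,1)`. -/
theorem statement13 (n : ℕ) (hn : 3 ≤ n) :
    let Γ := nCay GZ2 n (T4 n)
    let q : Fin ((n - 1) + 1) → GZ2 × ZMod n := fun k => (1, 1 - (k.val : ZMod n))
    (IsUndirPath Γ q ∧ q 0 = (1, 1) ∧ q (Fin.last (n - 1)) = (1, 2)) ∧
    (∀ p : Fin ((n - 1) + 1) → GZ2 × ZMod n,
       IsUndirPath Γ p → p 0 = (1, 1) → p (Fin.last (n - 1)) = (1, 2) → p = q) ∧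
    ¬ ∃ p : Fin ((n - 1) + 1) → GZ2 × ZMod n,
        IsUndirPath Γ p ∧ p 0 = (1, 2) ∧ p (Fin.last (n - 1)) = (aZ2, 1) := by
  intro Γ q
  have : NeZero n := ⟨by omega⟩
  have hq0 : q 0 = (1, 1) := by simp [q]
  have hq_last : q (Fin.last (n - 1)) = (1, 2) := cycleLabel_injective n <| by
    rw [cycleLabel_one_one_sub (by simp; omega), cycleLabel_one_two (by omega), Fin.val_last]
  exact ⟨⟨isUndirPath_one_sub (by omega), hq0, hq_last⟩,
    fun p hp hp0 hp_last => hp.eq_one_sub (by omega) hp0 hp_last,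
    fun ⟨p, hp, hp0, hp_last⟩ => hp.last_ne_aZ2_one hn hp0 hp_last⟩

end PDR
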